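/- Truncation error of the Gaussian LCU integral: for any Hermitian operator H, real τ > 0, ω ∈ ℝ, and x_c ≥ 2√(ln(2/ε)), the operator distance between g_τ(H−ω) = c ∫_{−∞}^{∞} p(x) e^{ixτω} e^{−iτxH} dx and its truncation g_{τ,x_c}(H−ω) = c ∫_{−x_c}^{x_c} p(x) e^{ixτω} e^{−iτxH} dx is at most ε, where p(x) = (1/√(2π)) e^{−x²/4} and c is the normalization constant making the untruncated expression equal e^{−τ²(H−ω)²}. -/

import Mathlib

/-!
Each `e^{ixτω} e^{-iτxH}` is unitary, so the integrand is dominated in norm by the Gaussian weight,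
which is the density of `𝒩(0, 2)`. The truncation error is therefore at most the mass that `𝒩(0, 2)`
puts outside `[-x_c, x_c]`, and the Chernoff bound for this sub-Gaussian law bounds that mass by
`2 e^{-x_c²/4} ≤ ε`.
-/

open MeasureTheory ProbabilityTheory Real Set
open scoped NNReal

section CStarAlgebra

variable {A : Type*} [NormedRing A] [NormedAlgebra ℂ A] [StarRing A] [CStarRing A]
  [StarModule ℂ A] [CompleteSpace A]

lemma IsSelfAdjoint.norm_exp_smul_le_one {a : A} (ha : IsSelfAdjoint a) {z : ℂ}
    (hz : z ∈ skewAdjoint ℂ) : ‖NormedSpace.exp (z • a)‖ ≤ 1 := by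
  rcases subsingleton_or_nontrivial A with _ | _
  · simp [Subsingleton.elim (NormedSpace.exp (z • a)) 0]
  · let +nondep : NormedAlgebra ℚ A := .restrictScalars ℚ ℂ A
    exact (CStarRing.norm_of_mem_unitary
      (NormedSpace.exp_mem_unitary_of_mem_skewAdjoint (ha.smul_mem_skewAdjoint hz))).le

end CStarAlgebra

namespace ProbabilityTheory

lemma hasSubgaussianMGF_id_gaussianReal (v : ℝ≥0) : HasSubgaussianMGF id v (gaussianReal 0 v) where
  integrable_exp_mul := integrable_exp_mul_gaussianReal
  mgf_le t := by simp [mgf_id_gaussianReal]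

lemma gaussianReal_real_compl_Icc_le (v : ℝ≥0) {c : ℝ} (hc : 0 ≤ c) :
    (gaussianReal 0 v).real (Icc (-c) c)ᶜ ≤ 2 * exp (-c ^ 2 / (2 * v)) := by
  have h := hasSubgaussianMGF_id_gaussianReal v
  have hsub : (Icc (-c) c)ᶜ ⊆ {x | c ≤ id x} ∪ {x | c ≤ (-id) x} := by
    intro x hx
    simp only [mem_compl_iff, mem_Icc, not_and_or, not_le] at hx
    rcases hx with hleft | hright
    · exact Or.inr (show c ≤ -x by linarith)
    · exact Or.inl (show c ≤ x by linarith)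
  calc (gaussianReal 0 v).real (Icc (-c) c)ᶜ
      ≤ (gaussianReal 0 v).real ({x | c ≤ id x} ∪ {x | c ≤ (-id) x}) := measureReal_mono hsub
    _ ≤ (gaussianReal 0 v).real {x | c ≤ id x} + (gaussianReal 0 v).real {x | c ≤ (-id) x} :=
        measureReal_union_le _ _
    _ ≤ exp (-c ^ 2 / (2 * v)) + exp (-c ^ 2 / (2 * v)) :=
        add_le_add (h.measure_ge_le hc) (h.neg.measure_ge_le hc)
    _ = 2 * exp (-c ^ 2 / (2 * v)) := by ring

lemma setIntegral_gaussianPDFReal (μ : ℝ) {v : ℝ≥0} (hv : v ≠ 0) (s : Set ℝ) :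
    ∫ x in s, gaussianPDFReal μ v x = (gaussianReal μ v).real s := by
  rw [measureReal_def, gaussianReal_apply_eq_integral μ hv,
    ENNReal.toReal_ofReal (setIntegral_nonneg_of_ae (ae_of_all _ (gaussianPDFReal_nonneg μ v)))]

lemma gaussianPDFReal_zero_two (x : ℝ) :
    gaussianPDFReal 0 2 x = (2 * √π)⁻¹ * exp (-(x ^ 2) / 4) := by
  rw [gaussianPDFReal_def]
  have : √(2 * π * (2 : ℝ≥0)) = 2 * √π := by
    rw [show 2 * π * ((2 : ℝ≥0) : ℝ) = 2 ^ 2 * π by push_cast; ring, sqrt_mul (by positivity),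
      sqrt_sq (by norm_num)]
  simp only [this, sub_zero]
  congr 2
  push_cast; ring

end ProbabilityTheory

lemma norm_integral_sub_setIntegral_le_of_norm_le {α E : Type*} [MeasurableSpace α] {μ : Measure α}
    [NormedAddCommGroup E] [NormedSpace ℝ E] {f : α → E} {g : α → ℝ} {s : Set α}
    (hs : MeasurableSet s) (hf : Integrable f μ) (hg : Integrable g μ) (hfg : ∀ x, ‖f x‖ ≤ g x) :
    ‖∫ x, f x ∂μ - ∫ x in s, f x ∂μ‖ ≤ ∫ x in sᶜ, g x ∂μ := by
  rw [← integral_add_compl hs hf, add_sub_cancel_left]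
  exact norm_integral_le_of_norm_le hg.integrableOn (ae_of_all _ hfg)

lemma norm_integral_smul_sub_setIntegral_smul_le {α E : Type*} [MeasurableSpace α]
    {μ : Measure α} [NormedAddCommGroup E] [NormedSpace ℝ E] {g : α → ℝ} {u : α → E} {s : Set α}
    (hs : MeasurableSet s) (hg : Integrable g μ) (hg_nonneg : 0 ≤ g)
    (hu : AEStronglyMeasurable u μ) (hu_le : ∀ x, ‖u x‖ ≤ 1) :
    ‖∫ x, g x • u x ∂μ - ∫ x in s, g x • u x ∂μ‖ ≤ ∫ x in sᶜ, g x ∂μ := by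
  have hgu : ∀ x, ‖g x • u x‖ ≤ g x := fun x => by
    simpa [norm_smul, abs_of_nonneg (hg_nonneg x)] using
      mul_le_of_le_one_right (hg_nonneg x) (hu_le x)
  exact norm_integral_sub_setIntegral_le_of_norm_le hs
    (hg.mono' (hg.aestronglyMeasurable.smul hu) (ae_of_all _ hgu)) hg hgu

lemma two_mul_exp_neg_sq_div_four_le {c ε : ℝ} (hε : 0 < ε) (hc : 2 * √(log (2 / ε)) ≤ c) :
    2 * exp (-c ^ 2 / 4) ≤ ε := by
  have hlog : log (2 / ε) ≤ (c / 2) ^ 2 :=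
    (sqrt_le_left (by linarith [sqrt_nonneg (log (2 / ε))])).mp (by linarith)
  calc 2 * exp (-c ^ 2 / 4) ≤ 2 * exp (-log (2 / ε)) := by gcongr; linarith
    _ = ε := by rw [exp_neg, exp_log (by positivity)]; field_simp

theorem stmt_6_general
    {E : Type*} [NormedAddCommGroup E] [InnerProductSpace ℂ E] [FiniteDimensional ℂ E]
    (H : E →L[ℂ] E) (hH : IsSelfAdjoint H) (τ ω xc ε : ℝ)
    (hε : 0 < ε)
    (hxc : 2 * Real.sqrt (Real.log (2 / ε)) ≤ xc) :
    ‖(∫ x : ℝ, ((2 * Real.sqrt Real.pi)⁻¹ * Real.exp (-(x ^ 2) / 4)) •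
          (Complex.exp (Complex.I * x * τ * ω) •
            NormedSpace.exp ((-(Complex.I * τ * x)) • H)))
      - (∫ x in Set.Icc (-xc) xc, ((2 * Real.sqrt Real.pi)⁻¹ * Real.exp (-(x ^ 2) / 4)) •
          (Complex.exp (Complex.I * x * τ * ω) •
            NormedSpace.exp ((-(Complex.I * τ * x)) • H)))‖ ≤ ε := by
  have := FiniteDimensional.complete ℂ E
  have hu_le (x : ℝ) : ‖Complex.exp (Complex.I * x * τ * ω) •
      NormedSpace.exp ((-(Complex.I * τ * x)) • H)‖ ≤ 1 := by
    have hz : -(Complex.I * τ * x) ∈ skewAdjoint ℂ := by simp [skewAdjoint.mem_iff]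
    rw [norm_smul, Complex.norm_exp]
    simpa using hH.norm_exp_smul_le_one hz
  have hu_cont : Continuous fun x : ℝ => Complex.exp (Complex.I * x * τ * ω) •
      NormedSpace.exp ((-(Complex.I * τ * x)) • H) := by
    let +nondep : NormedAlgebra ℚ (E →L[ℂ] E) := .restrictScalars ℚ ℂ _
    fun_prop
  simp_rw [← gaussianPDFReal_zero_two]
  calc _ ≤ ∫ x in (Icc (-xc) xc)ᶜ, gaussianPDFReal 0 2 x :=
        norm_integral_smul_sub_setIntegral_smul_le measurableSet_Icc
          (integrable_gaussianPDFReal 0 2) (gaussianPDFReal_nonneg 0 2)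
          hu_cont.aestronglyMeasurable hu_le
    _ = (gaussianReal 0 2).real (Icc (-xc) xc)ᶜ := setIntegral_gaussianPDFReal 0 two_ne_zero _
    _ ≤ 2 * exp (-xc ^ 2 / (2 * (2 : ℝ≥0))) :=
        gaussianReal_real_compl_Icc_le 2 (le_trans (by positivity) hxc)
    _ ≤ ε := by convert two_mul_exp_neg_sq_div_four_le hε hxc using 4; norm_num

/-- Truncation error of the Gaussian LCU integral: cutting the real-time integral at
`x_c ≥ 2 √(ln (2/ε))` changes the filter by at most `ε` in operator norm.  Here
`p x = (2√π)⁻¹ e^{-x²/4}` is the (normalised) Gaussian density and `c = 1`. -/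
theorem stmt_6
    {E : Type*} [NormedAddCommGroup E] [InnerProductSpace ℂ E] [FiniteDimensional ℂ E]
    (H : E →L[ℂ] E) (hH : IsSelfAdjoint H) (τ ω xc ε : ℝ)
    (hτ : 0 < τ) (hε : 0 < ε)
    (hxc : 2 * Real.sqrt (Real.log (2 / ε)) ≤ xc) :
    ‖(∫ x : ℝ, ((2 * Real.sqrt Real.pi)⁻¹ * Real.exp (-(x ^ 2) / 4)) •
          (Complex.exp (Complex.I * x * τ * ω) •
            NormedSpace.exp ((-(Complex.I * τ * x)) • H)))
      - (∫ x in Set.Icc (-xc) xc, ((2 * Real.sqrt Real.pi)⁻¹ * Real.exp (-(x ^ 2) / 4)) •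
          (Complex.exp (Complex.I * x * τ * ω) •
            NormedSpace.exp ((-(Complex.I * τ * x)) • H)))‖ ≤ ε :=
  stmt_6_general H hH τ ω xc ε hε hxc
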